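/- Let G be an h × n random binary matrix with i.i.d. Bernoulli(u/(d+u)) entries, k = d + u ≤ n, q = (u/k)^u (d/k)^d, 0 < δ < 1, and z = (1−δ)qh (an integer). If C(n,k)·C(k,u)·exp(−δ²qh/2) < 1, then with positive probability G is an (n, d, u; z]-disjunct matrix; in particular such a matrix exists. -/

import Mathlib

/-- A `h × n` binary matrix `M` is `(n, d, u; z]`-disjunct. -/
def IsDisjunct {t n : ℕ} (M : Fin t → Fin n → Bool) (d u z : ℕ) : Prop :=
  ∀ S₁ S₂ : Finset (Fin n), Disjoint S₁ S₂ → S₁.card = d → S₂.card = u →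
    z ≤ (Finset.univ.filter
      (fun i => (∀ j ∈ S₂, M i j = true) ∧ (∀ j ∈ S₁, M i j = false))).card

/-- `q = (u/k)^u (d/k)^d` with `k = d + u`. -/
noncomputable def goodRowProb (d u : ℕ) : ℝ :=
  ((u : ℝ) / ((d : ℝ) + u)) ^ u * ((d : ℝ) / ((d : ℝ) + u)) ^ d

/-!
Probabilistic method with a Chernoff bound. Give each matrix the probability of arising with
i.i.d. Bernoulli(`p`) entries, `p = u/(d+u)`, so that a row is good for a fixed pair `(S₁, S₂)`
with probability `q`. The number `X` of good rows is a sum of `h` independent indicators, so by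
Markov's inequality for `(1-δ)^X`,
`P(X < z) ≤ (1 - δq)^h / (1-δ)^z ≤ exp(-δqh - z log(1-δ)) ≤ exp(-δ²qh/2)`,
the last step being `δ + (1-δ) log(1-δ) ≥ δ²/2`. A union bound over the `C(n,k)·C(k,u)` pairs
leaves a matrix that is bad for no pair.
-/

open Finset

noncomputable def productWeight {ι β : Type*} [Fintype ι] (w : β → ℝ) (f : ι → β) : ℝ :=
  ∏ i, w (f i)

def bernoulliWeight (p : ℝ) (b : Bool) : ℝ := if b then p else 1 - p

section ProductWeight

variable {ι β : Type*} [Fintype ι] [DecidableEq ι] [Fintype β] {w : β → ℝ}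

omit [DecidableEq ι] [Fintype β] in
lemma productWeight_nonneg (hw : ∀ b, 0 ≤ w b) (f : ι → β) : 0 ≤ productWeight w f :=
  prod_nonneg fun i _ => hw (f i)

lemma sum_productWeight (w : β → ℝ) :
    ∑ f : ι → β, productWeight w f = (∑ b, w b) ^ Fintype.card ι := by
  rw [← card_univ, ← prod_const, Fintype.prod_sum]
  rfl

lemma sum_productWeight_eq_one (hw : ∑ b, w b = 1) : ∑ f : ι → β, productWeight w f = 1 := by
  rw [sum_productWeight, hw, one_pow]

lemma sum_productWeight_filter_forall_eq [DecidableEq β] (hw : ∑ b, w b = 1)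
    (T : Finset ι) (g : ι → β) :
    ∑ f with ∀ i ∈ T, f i = g i, productWeight w f = ∏ i ∈ T, w (g i) := by
  have hpi : ({f | ∀ i ∈ T, f i = g i} : Finset (ι → β)) =
      Fintype.piFinset fun i => if i ∈ T then {g i} else univ := by
    ext f
    simp only [mem_filter, mem_univ, true_and, Fintype.mem_piFinset]
    refine forall_congr' fun i => ?_
    split_ifs with hi <;> simp [hi]
  simp only [hpi, productWeight]
  rw [← prod_univ_sum, ← univ_inter T, ← prod_ite_mem]
  refine prod_congr rfl fun i _ => ?_
  split_ifs <;> simp_all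

/-- Markov's inequality for `c ^ X`: with the tilted row weight `w b * c ^ [P b]`,
`productWeight w f * c ^ #{i | P (f i)}` is again a product weight. -/
lemma sum_productWeight_card_lt_mul_pow_le (hw0 : ∀ b, 0 ≤ w b) (hw1 : ∑ b, w b = 1)
    (P : β → Prop) [DecidablePred P] {c : ℝ} (hc0 : 0 ≤ c) (hc1 : c ≤ 1) (z : ℕ) :
    (∑ f : ι → β with #{i | P (f i)} < z, productWeight w f) * c ^ z ≤
      (1 - (1 - c) * ∑ b with P b, w b) ^ Fintype.card ι := by
  set tilt : β → ℝ := fun b => w b * if P b then c else 1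
  have htilt (f : ι → β) : productWeight tilt f = productWeight w f * c ^ #{i | P (f i)} := by
    simp only [productWeight, tilt, prod_mul_distrib, prod_ite, prod_const_one, mul_one,
      prod_const]
  have hsum : ∑ b, tilt b = 1 - (1 - c) * ∑ b with P b, w b :=
    calc ∑ b, tilt b = ∑ b, (w b - (1 - c) * if P b then w b else 0) :=
          sum_congr rfl fun b _ => by simp only [tilt]; split_ifs <;> ring
      _ = _ := by rw [sum_sub_distrib, ← mul_sum, ← sum_filter, hw1]
  calc (∑ f : ι → β with #{i | P (f i)} < z, productWeight w f) * c ^ z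
      ≤ ∑ f : ι → β with #{i | P (f i)} < z, productWeight tilt f := by
        rw [sum_mul]
        refine sum_le_sum fun f hf => ?_
        rw [htilt]
        exact mul_le_mul_of_nonneg_left (pow_le_pow_of_le_one hc0 hc1 (mem_filter.1 hf).2.le)
          (productWeight_nonneg hw0 f)
    _ ≤ ∑ f : ι → β, productWeight tilt f :=
        sum_le_sum_of_subset_of_nonneg (filter_subset _ _) fun f _ _ =>
          productWeight_nonneg (fun b => mul_nonneg (hw0 b) (by split_ifs <;> linarith)) f
    _ = _ := by rw [sum_productWeight, hsum]

end ProductWeight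

lemma sum_bernoulliWeight (p : ℝ) : ∑ b, bernoulliWeight p b = 1 := by simp [bernoulliWeight]

lemma bernoulliWeight_nonneg {p : ℝ} (hp0 : 0 ≤ p) (hp1 : p ≤ 1) (b : Bool) :
    0 ≤ bernoulliWeight p b := by
  cases b <;> simp [bernoulliWeight] <;> linarith

abbrev IsGoodRow {ι : Type*} (S₁ S₂ : Finset ι) (r : ι → Bool) : Prop :=
  (∀ j ∈ S₂, r j = true) ∧ (∀ j ∈ S₁, r j = false)

lemma isGoodRow_iff {ι : Type*} [DecidableEq ι] {S₁ S₂ : Finset ι} (hS : Disjoint S₁ S₂)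
    (r : ι → Bool) : IsGoodRow S₁ S₂ r ↔ ∀ j ∈ S₁ ∪ S₂, r j = decide (j ∈ S₂) := by
  simp only [mem_union]
  constructor
  · rintro ⟨h₂, h₁⟩ j (hj | hj)
    · simp [h₁ j hj, disjoint_left.1 hS hj]
    · simp [h₂ j hj, hj]
  · intro h
    exact ⟨fun j hj => by simpa [hj] using h j (.inr hj),
      fun j hj => by simpa [disjoint_left.1 hS hj] using h j (.inl hj)⟩

lemma sum_productWeight_isGoodRow {ι : Type*} [Fintype ι] [DecidableEq ι] (p : ℝ)
    {S₁ S₂ : Finset ι} [DecidablePred (IsGoodRow S₁ S₂)] (hS : Disjoint S₁ S₂) :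
    ∑ r with IsGoodRow S₁ S₂ r, productWeight (bernoulliWeight p) r =
      p ^ #S₂ * (1 - p) ^ #S₁ := by
  rw [filter_congr fun r _ => isGoodRow_iff hS r,
    sum_productWeight_filter_forall_eq (sum_bernoulliWeight p), prod_union hS, mul_comm]
  congr 1 <;> refine prod_eq_pow_card fun j hj => ?_
  · simp [bernoulliWeight, hj]
  · simp [bernoulliWeight, disjoint_left.1 hS hj]

lemma sub_inv_div_two_le_log {x : ℝ} (hx0 : 0 < x) (hx1 : x ≤ 1) :
    (x - x⁻¹) / 2 ≤ Real.log x := by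
  have := Real.self_le_sinh_iff.2 (neg_nonneg.2 (Real.log_nonpos hx0.le hx1))
  rw [Real.sinh_eq, neg_neg, Real.exp_neg, Real.exp_log hx0] at this
  linarith

lemma one_sub_mul_pow_le_exp_mul_pow {δ q : ℝ} (hδ0 : 0 < δ) (hδ1 : δ < 1) (hq0 : 0 ≤ q)
    (hq1 : q ≤ 1) {h z : ℕ} (hz : (z : ℝ) = (1 - δ) * q * h) :
    (1 - δ * q) ^ h ≤ Real.exp (-(δ ^ 2 * q * h) / 2) * (1 - δ) ^ z := by
  have hc0 : 0 < 1 - δ := by linarith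
  have hlog : δ ^ 2 / 2 ≤ δ + (1 - δ) * Real.log (1 - δ) := by
    have key := mul_le_mul_of_nonneg_left (sub_inv_div_two_le_log hc0 (by linarith)) hc0.le
    have hx : (1 - δ) * ((1 - δ - (1 - δ)⁻¹) / 2) = ((1 - δ) ^ 2 - 1) / 2 := by field_simp
    linarith
  calc (1 - δ * q) ^ h ≤ Real.exp (-(δ * q)) ^ h := by
        gcongr
        · nlinarith
        · linarith [Real.add_one_le_exp (-(δ * q))]
    _ = Real.exp (-(δ * q * h)) := by rw [← Real.exp_nat_mul]; ring_nf
    _ ≤ Real.exp (-(δ ^ 2 * q * h) / 2 + z * Real.log (1 - δ)) := by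
        gcongr
        rw [hz]
        nlinarith [mul_le_mul_of_nonneg_left hlog (by positivity : (0 : ℝ) ≤ q * h)]
    _ = Real.exp (-(δ ^ 2 * q * h) / 2) * (1 - δ) ^ z := by
        rw [Real.exp_add, Real.exp_nat_mul, Real.exp_log hc0]

lemma sum_productWeight_card_isGoodRow_lt_le {ι κ : Type*} [Fintype ι] [DecidableEq ι]
    [Fintype κ] [DecidableEq κ] {p δ : ℝ} (hp0 : 0 ≤ p) (hp1 : p ≤ 1) (hδ0 : 0 < δ) (hδ1 : δ < 1)
    {S₁ S₂ : Finset κ} [DecidablePred (IsGoodRow S₁ S₂)] (hS : Disjoint S₁ S₂) {d u z : ℕ}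
    (h₁ : #S₁ = d) (h₂ : #S₂ = u)
    (hz : (z : ℝ) = (1 - δ) * (p ^ u * (1 - p) ^ d) * Fintype.card ι) :
    ∑ M : ι → κ → Bool with #{i | IsGoodRow S₁ S₂ (M i)} < z,
        productWeight (productWeight (bernoulliWeight p)) M ≤
      Real.exp (-(δ ^ 2 * (p ^ u * (1 - p) ^ d) * Fintype.card ι) / 2) := by
  have hq' : 0 ≤ 1 - p := by linarith
  have hq0 : 0 ≤ p ^ u * (1 - p) ^ d := by positivity
  have hq1 : p ^ u * (1 - p) ^ d ≤ 1 :=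
    mul_le_one₀ (pow_le_one₀ hp0 hp1) (pow_nonneg hq' _) (pow_le_one₀ hq' (by linarith))
  have hmarkov := sum_productWeight_card_lt_mul_pow_le (ι := ι)
    (productWeight_nonneg (bernoulliWeight_nonneg hp0 hp1))
    (sum_productWeight_eq_one (sum_bernoulliWeight p)) (IsGoodRow S₁ S₂) (c := 1 - δ)
    (by linarith) (by linarith) z
  rw [sum_productWeight_isGoodRow p hS, h₁, h₂, sub_sub_cancel] at hmarkov
  exact le_of_mul_le_mul_right (hmarkov.trans (one_sub_mul_pow_le_exp_mul_pow hδ0 hδ1 hq0 hq1 hz))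
    (pow_pos (by linarith) z)

lemma exists_forall_not_of_sum_lt_one {α γ : Type*} [Fintype α] {w : α → ℝ}
    (hw0 : ∀ a, 0 ≤ w a) (hw1 : ∑ a, w a = 1) (s : Finset γ) (Bad : γ → α → Prop)
    [∀ g, DecidablePred (Bad g)] (hs : ∑ g ∈ s, ∑ a with Bad g a, w a < 1) :
    ∃ a, ∀ g ∈ s, ¬ Bad g a := by
  by_contra! hbad
  refine hs.not_ge ?_
  calc 1 = ∑ a, w a := hw1.symm
    _ ≤ ∑ a, ∑ g ∈ s, if Bad g a then w a else 0 := sum_le_sum fun a _ => by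
        obtain ⟨g, hg, hga⟩ := hbad a
        calc w a = if Bad g a then w a else 0 := (if_pos hga).symm
          _ ≤ _ := single_le_sum (f := fun g => if Bad g a then w a else 0)
            (fun g _ => by split_ifs <;> simp [hw0]) hg
    _ = ∑ g ∈ s, ∑ a with Bad g a, w a := by rw [sum_comm]; simp only [sum_filter]

lemma card_sigma_powersetCard {ι : Type*} [Fintype ι] (k u : ℕ) :
    #((univ.powersetCard k : Finset (Finset ι)).sigma (powersetCard u)) =
      (Fintype.card ι).choose k * k.choose u := by
  rw [card_sigma, sum_const_nat fun S hS => by rw [card_powersetCard, (mem_powersetCard.1 hS).2],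
    card_powersetCard, card_univ]

lemma goodRowProb_eq (d u : ℕ) :
    goodRowProb d u = ((u : ℝ) / (d + u)) ^ u * (1 - (u : ℝ) / (d + u)) ^ d := by
  rcases Nat.eq_zero_or_pos (d + u) with h | h
  · obtain ⟨rfl, rfl⟩ : d = 0 ∧ u = 0 := by omega
    simp [goodRowProb]
  · have : (d : ℝ) + u ≠ 0 := by norm_cast; omega
    rw [goodRowProb, one_sub_div this, add_sub_cancel_right]

theorem exists_disjunct_of_union_bound_general
    (d u n h z : ℕ)
    (δ : ℝ) (hδ0 : 0 < δ) (hδ1 : δ < 1)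
    (hz : (z : ℝ) = (1 - δ) * goodRowProb d u * h)
    (hbound : ((n.choose (d + u) : ℕ) : ℝ) * (((d + u).choose u : ℕ) : ℝ) *
        Real.exp (-(δ ^ 2 * goodRowProb d u * h) / 2) < 1) :
    ∃ M : Fin h → Fin n → Bool, IsDisjunct M d u z := by
  set p : ℝ := u / (d + u)
  have hp0 : 0 ≤ p := by positivity
  have hp1 : p ≤ 1 := div_le_one_of_le₀ (by linarith) (by positivity)
  rw [goodRowProb_eq] at hz hbound
  -- `⟨S, S₂⟩` stands for the pair `(S \ S₂, S₂)`.
  set pairs := (univ.powersetCard (d + u) : Finset (Finset (Fin n))).sigma (powersetCard u)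
  have hpair : ∀ P ∈ pairs, ∑ M : Fin h → Fin n → Bool with
      #{i | IsGoodRow (P.1 \ P.2) P.2 (M i)} < z,
        productWeight (productWeight (bernoulliWeight p)) M ≤
      Real.exp (-(δ ^ 2 * (p ^ u * (1 - p) ^ d) * h) / 2) := by
    intro P hP
    simp only [pairs, mem_sigma, mem_powersetCard] at hP
    simpa using sum_productWeight_card_isGoodRow_lt_le (ι := Fin h) hp0 hp1 hδ0 hδ1
      sdiff_disjoint (by rw [card_sdiff_of_subset hP.2.1]; omega) hP.2.2 (by simpa using hz)
  obtain ⟨M, hM⟩ := exists_forall_not_of_sum_lt_one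
    (productWeight_nonneg (productWeight_nonneg (bernoulliWeight_nonneg hp0 hp1)))
    (sum_productWeight_eq_one (sum_productWeight_eq_one (sum_bernoulliWeight p))) pairs
    (fun P M => #{i | IsGoodRow (P.1 \ P.2) P.2 (M i)} < z) <|
    calc _ ≤ ∑ _ ∈ pairs, Real.exp (-(δ ^ 2 * (p ^ u * (1 - p) ^ d) * h) / 2) := sum_le_sum hpair
      _ < 1 := by
        rwa [sum_const, card_sigma_powersetCard, Fintype.card_fin, nsmul_eq_mul, Nat.cast_mul]
  refine ⟨M, fun S₁ S₂ hS h₁ h₂ => not_lt.1 ?_⟩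
  simpa [union_sdiff_cancel_right hS] using hM ⟨S₁ ∪ S₂, S₂⟩
    (by simp [pairs, card_union_of_disjoint hS, h₁, h₂])

/-- If `C(n,k)·C(k,u)·exp(-δ²qh/2) < 1` and `z = (1-δ)qh`, then (with positive
probability a random matrix works, so) an `(n, d, u; z]`-disjunct `h × n` matrix exists. -/
theorem exists_disjunct_of_union_bound
    (d u n h z : ℕ) (hd : 0 < d) (hu : 0 < u) (hk : d + u ≤ n)
    (δ : ℝ) (hδ0 : 0 < δ) (hδ1 : δ < 1)
    (hz : (z : ℝ) = (1 - δ) * goodRowProb d u * h)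
    (hbound : ((n.choose (d + u) : ℕ) : ℝ) * (((d + u).choose u : ℕ) : ℝ) *
        Real.exp (-(δ ^ 2 * goodRowProb d u * h) / 2) < 1) :
    ∃ M : Fin h → Fin n → Bool, IsDisjunct M d u z :=
  exists_disjunct_of_union_bound_general d u n h z δ hδ0 hδ1 hz hbound
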